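/- arXiv:2410.05921 — 5 statements merged into one kernel-verified Lean document; each statement's English description precedes it below -/
import Mathlib

section
/- Let M be a pre-meadow and let z ∈ 0·M. Then the set M_z = {x ∈ M : 0·x = z} is closed under the operations of M and is a commutative ring, with additive identity z and multiplicative identity 1 + z. -/
/-- A pre-meadow structure on a type `P` with given operations. -/
structure IsPreMeadow {P : Type*} (add mul : P → P → P) (neg : P → P) (zero one : P) : Prop where
  zero_ne_one : zero ≠ one
  add_assoc : ∀ x y z : P, add (add x y) z = add x (add y z)
  add_comm : ∀ x y : P, add x y = add y x
  add_zero : ∀ x : P, add x zero = x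
  add_neg : ∀ x : P, add x (neg x) = mul zero x
  mul_assoc : ∀ x y z : P, mul (mul x y) z = mul x (mul y z)
  mul_comm : ∀ x y : P, mul x y = mul y x
  one_mul : ∀ x : P, mul one x = x
  mul_add : ∀ x y z : P, mul x (add y z) = add (mul x y) (mul x z)
  neg_neg : ∀ x : P, neg (neg x) = x
  zero_mul_add : ∀ x y : P, mul zero (add x y) = mul (mul zero x) y

/-- Let `M` be a pre-meadow and `z ∈ 0·M`.  Then the set
`M_z = {x ∈ M : 0·x = z}` is closed under the operations of `M`, and it is a commutative ring whose
addition and multiplication are induced by those of `M`, with additive identity `z` and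
multiplicative identity `1 + z`. -/
theorem statement2 {M : Type*} (add mul : M → M → M) (neg : M → M) (zero one : M)
    (h : IsPreMeadow add mul neg zero one) (z : M) (hz : ∃ x : M, mul zero x = z) :
    (∀ x y : M, mul zero x = z → mul zero y = z → mul zero (add x y) = z) ∧
    (∀ x y : M, mul zero x = z → mul zero y = z → mul zero (mul x y) = z) ∧
    (∀ x : M, mul zero x = z → mul zero (neg x) = z) ∧
    ∃ R : CommRing {x : M // mul zero x = z},
      (∀ p q : {x : M // mul zero x = z}, ((letI := R; p + q : {x : M // mul zero x = z}) : M) = add p.1 q.1) ∧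
      (∀ p q : {x : M // mul zero x = z}, ((letI := R; p * q : {x : M // mul zero x = z}) : M) = mul p.1 q.1) ∧
      ((letI := R; (0 : {x : M // mul zero x = z})) : M) = z ∧
      ((letI := R; (1 : {x : M // mul zero x = z})) : M) = add one z := by
  obtain ⟨w, hw⟩ := hz
  -- basic lemmas
  have idem : ∀ x : M, mul zero (mul zero x) = mul zero x := by
    intro x
    have := h.zero_mul_add x zero
    rw [h.add_zero] at this
    rw [h.mul_comm (mul zero x) zero] at this
    exact this.symm
  have hz0 : mul zero z = z := by rw [← hw, idem]
  have habsorb : ∀ x : M, add x (mul zero x) = x := by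
    intro x
    have h1 : add x (mul zero x) = mul x (add one zero) := by
      rw [h.mul_add, h.mul_comm x one, h.one_mul, h.mul_comm x zero]
    rw [h1, h.add_zero, h.mul_comm, h.one_mul]
  have hzz : add z z = z := by
    have := habsorb z
    rwa [hz0] at this
  have key : ∀ a b : M, mul (mul zero a) b = add (mul zero a) (mul zero b) := by
    intro a b
    rw [← h.zero_mul_add, h.mul_add]
  have hzmul : ∀ x : M, mul zero x = z → mul z x = z := by
    intro x hx
    rw [← hw, key, hw, hx, hzz]
  have hzadd : ∀ x : M, mul zero x = z → add x z = x := by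
    intro x hx
    rw [← hx, habsorb]
  have hnegc : ∀ x : M, mul zero (neg x) = mul zero x := by
    intro x
    have e : ∀ y : M, mul zero y = add (mul zero y) (mul zero (neg y)) := by
      intro y
      have := h.mul_add zero y (neg y)
      rw [h.add_neg, idem] at this
      exact this
    have e1 := e x
    have e2 := e (neg x)
    rw [h.neg_neg] at e2
    rw [e1, h.add_comm, ← e2]
  have closedAdd : ∀ x y : M, mul zero x = z → mul zero y = z → mul zero (add x y) = z := by
    intro x y hx hy
    rw [h.mul_add, hx, hy, hzz]
  have closedMul : ∀ x y : M, mul zero x = z → mul zero y = z → mul zero (mul x y) = z := by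
    intro x y hx hy
    rw [← h.mul_assoc, key, hx, hy, hzz]
  have closedNeg : ∀ x : M, mul zero x = z → mul zero (neg x) = z := by
    intro x hx
    rw [hnegc, hx]
  refine ⟨closedAdd, closedMul, closedNeg, ?_⟩
  letI : Add {x : M // mul zero x = z} := ⟨fun p q => ⟨add p.1 q.1, closedAdd _ _ p.2 q.2⟩⟩
  letI : Mul {x : M // mul zero x = z} := ⟨fun p q => ⟨mul p.1 q.1, closedMul _ _ p.2 q.2⟩⟩
  letI : Neg {x : M // mul zero x = z} := ⟨fun p => ⟨neg p.1, closedNeg _ p.2⟩⟩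
  letI : Zero {x : M // mul zero x = z} := ⟨⟨z, hz0⟩⟩
  letI : One {x : M // mul zero x = z} := ⟨⟨add one z, by
    rw [h.mul_add, hz0, h.mul_comm, h.one_mul]
    have : add zero z = add z zero := h.add_comm _ _
    rw [this, h.add_zero]⟩⟩
  refine ⟨CommRing.ofMinimalAxioms (fun a b c => Subtype.ext (h.add_assoc _ _ _))
    (fun a => Subtype.ext ?_) (fun a => Subtype.ext ?_)
    (fun a b c => Subtype.ext (h.mul_assoc _ _ _))
    (fun a b => Subtype.ext (h.mul_comm _ _))
    (fun a => Subtype.ext ?_)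
    (fun a b c => Subtype.ext (h.mul_add _ _ _)), fun p q => rfl, fun p q => rfl, rfl, rfl⟩
  · show add z a.1 = a.1
    rw [h.add_comm]
    exact hzadd a.1 a.2
  · show add (neg a.1) a.1 = z
    rw [h.add_comm, h.add_neg, a.2]
  · show mul (add one z) a.1 = a.1
    rw [h.mul_comm, h.mul_add, h.mul_comm a.1 one, h.one_mul, h.mul_comm a.1 z,
      hzmul a.1 a.2]
    exact hzadd a.1 a.2
end

section
/- Let M be a pre-meadow and let z, z′ ∈ 0·M with z ≤ z′ (i.e., z·z′ = z). Then the map f_{z,z′} : M_{z′} → M_z defined by f_{z,z′}(x) = x + z is a ring homomorphism between the rings M_{z′} and M_z. Moreover, if z ≤ z′ ≤ z″ in 0·M, then f_{z,z′} ∘ f_{z′,z″} = f_{z,z″}. -/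
/-- Let `M` be a pre-meadow and `z, z' ∈ 0·M` with `z ≤ z'` (i.e. `z·z' = z`).
Then the map `f_{z,z'} : M_{z'} → M_z`, `x ↦ x + z`, is a ring homomorphism between the rings
`M_{z'}` (with zero `z'` and one `1 + z'`) and `M_z` (with zero `z` and one `1 + z`): it maps
`M_{z'}` into `M_z`, preserves addition and multiplication, and sends the identity `1 + z'` to
`1 + z`.  Moreover, if also `z' ≤ z''` with `z'' ∈ 0·M`, then `f_{z,z'} ∘ f_{z',z''} = f_{z,z''}`. -/
theorem statement3 {M : Type*} (add mul : M → M → M) (neg : M → M) (zero one : M)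
    (h : IsPreMeadow add mul neg zero one) (z z' z'' : M)
    (hz : ∃ x : M, mul zero x = z) (hz' : ∃ x : M, mul zero x = z')
    (hz'' : ∃ x : M, mul zero x = z'')
    (hle : mul z z' = z) (hle' : mul z' z'' = z') :
    (∀ x : M, mul zero x = z' → mul zero (add x z) = z) ∧
    (∀ x y : M, mul zero x = z' → mul zero y = z' →
      add (add x y) z = add (add x z) (add y z)) ∧
    (∀ x y : M, mul zero x = z' → mul zero y = z' →
      add (mul x y) z = mul (add x z) (add y z)) ∧
    (add (add one z') z = add one z) ∧
    (∀ x : M, mul zero x = z'' → add (add x z') z = add x z) := by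
  obtain ⟨a, ha⟩ := hz
  obtain ⟨b, hb⟩ := hz'
  -- 0·(0·x) = 0·x
  have L1 : ∀ x : M, mul zero (mul zero x) = mul zero x := by
    intro x
    have e := h.zero_mul_add x zero
    rw [h.add_zero, h.mul_comm (mul zero x) zero] at e
    exact e.symm
  have hzz : mul zero z = z := by rw [← ha, L1]
  have hzz' : mul zero z' = z' := by rw [← hb, L1]
  -- x + 0·x = x
  have L2 : ∀ x : M, add x (mul zero x) = x := by
    intro x
    have e := h.mul_add x one zero
    rw [h.add_zero, h.mul_comm x one, h.one_mul, h.mul_comm x zero] at e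
    exact e.symm
  have hzz2 : add z z = z := by
    have := L2 z; rwa [hzz] at this
  -- z·x = z whenever 0·x = z'
  have L4 : ∀ x : M, mul zero x = z' → mul z x = z := by
    intro x hx
    have e : mul z (mul zero x) = mul z x := by
      rw [← h.mul_assoc, h.mul_comm z zero, hzz]
    rw [hx, hle] at e
    exact e.symm
  have hzero1 : mul zero one = zero := by rw [h.mul_comm, h.one_mul]
  have h1z : mul zero (add one z) = z := by rw [h.zero_mul_add, hzero1, hzz]
  -- 0·(neg a) = 0·a
  have negz : ∀ x : M, mul zero (neg x) = mul zero x := by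
    intro x
    have e := h.add_neg (neg x)
    rw [h.neg_neg] at e
    rw [← e, h.add_comm, h.add_neg]
  -- z·a = z
  have za : mul z a = z := by
    have e := h.zero_mul_add (neg a) a
    rw [negz a, ha] at e
    rw [h.add_comm (neg a) a, h.add_neg a, L1, ha] at e
    exact e.symm
  -- z·z = z
  have zz : mul z z = z := by
    calc mul z z = mul z (mul zero a) := by rw [ha]
      _ = mul (mul z zero) a := (h.mul_assoc _ _ _).symm
      _ = mul (mul zero z) a := by rw [h.mul_comm z zero]
      _ = mul z a := by rw [hzz]
      _ = z := za
  -- z + z' = z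
  have L5 : add z z' = z := by
    have e1 : mul z' (add z one) = add z z' := by
      rw [h.mul_add, h.mul_comm z' z, hle, h.mul_comm z' one, h.one_mul]
    have e2 : mul z' (add z one) = z := by
      rw [← hb, h.mul_comm zero b, h.mul_assoc b zero (add z one),
        h.add_comm z one, h1z, h.mul_comm b z]
      exact L4 b hb
    rw [← e1, e2]
  refine ⟨?_, ?_, ?_, ?_, ?_⟩
  · intro x hx
    rw [h.zero_mul_add, hx, h.mul_comm z' z, hle]
  · intro x y _ _
    have : add (add x z) (add y z) = add (add x y) z :=
      calc add (add x z) (add y z)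
          = add x (add z (add y z)) := h.add_assoc _ _ _
        _ = add x (add (add z y) z) := by rw [h.add_assoc z y z]
        _ = add x (add (add y z) z) := by rw [h.add_comm z y]
        _ = add x (add y (add z z)) := by rw [h.add_assoc y z z]
        _ = add x (add y z) := by rw [hzz2]
        _ = add (add x y) z := (h.add_assoc x y z).symm
    exact this.symm
  · intro x y hx hy
    have yz : mul y z = z := by rw [h.mul_comm]; exact L4 y hy
    have e1 : mul (add x z) y = add (mul x y) z := by
      rw [h.mul_comm (add x z) y, h.mul_add, h.mul_comm y x, yz]
    have e2 : mul (add x z) z = z := by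
      rw [h.mul_comm (add x z) z, h.mul_add, L4 x hx, zz, hzz2]
    have : mul (add x z) (add y z) = add (mul x y) z :=
      calc mul (add x z) (add y z)
          = add (mul (add x z) y) (mul (add x z) z) := h.mul_add _ _ _
        _ = add (add (mul x y) z) z := by rw [e1, e2]
        _ = add (mul x y) (add z z) := h.add_assoc _ _ _
        _ = add (mul x y) z := by rw [hzz2]
    exact this.symm
  · rw [h.add_assoc, h.add_comm z' z, L5]
  · intro x _
    rw [h.add_assoc, h.add_comm z' z, L5]
end

section
/- Let X be a topological space, P a pre-meadow with 𝐚, and Φ : 0·P → Open(X) an isomorphism of lattices. Then the assignment F_{P,Φ}(U) = P_{Φ⁻¹(U)} for open U ⊆ X, with restriction maps F_{P,Φ}(U) → F_{P,Φ}(V) given by x ↦ x + Φ⁻¹(V) for open V ⊆ U, is a presheaf of commutative rings on X. -/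
/-- A pre-meadow with `𝐚`: there is a (unique) element `a ∈ 0·P` such that
`P_a = {x | 0·x = a}` has exactly one element and `x + a = a` for all `x`. -/
structure IsPreMeadowWithA {P : Type*} (add mul : P → P → P) (neg : P → P) (zero one a : P)
    extends IsPreMeadow add mul neg zero one : Prop where
  a_spec : ∃! x : P, mul zero x = a
  add_a : ∀ x : P, add x a = a
  a_uniq : ∀ b : P, (∃! x : P, mul zero x = b) → (∀ x : P, add x b = b) → b = a

/-- A common meadow: a pre-meadow with `𝐚` equipped with an inverse operation. -/
structure IsCommonMeadow {P : Type*} (add mul : P → P → P) (neg inv : P → P) (zero one a : P)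
    extends IsPreMeadowWithA add mul neg zero one a : Prop where
  mul_inv : ∀ x : P, mul x (inv x) = add one (mul zero (inv x))
  inv_mul : ∀ x y : P, inv (mul x y) = mul (inv x) (inv y)
  inv_one_add : ∀ x : P, inv (add one (mul zero x)) = add one (mul zero x)
  inv_zero : inv zero = a

namespace PMaux
variable {P : Type*} {add mul : P → P → P} {neg : P → P} {zero one : P}

lemma l1 (hP : IsPreMeadow add mul neg zero one) (x : P) :
    mul zero (mul zero x) = mul zero x := by
  have h := hP.zero_mul_add x zero
  rw [hP.add_zero] at h
  rw [hP.mul_comm zero (mul zero x), ← h]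

lemma l3 (hP : IsPreMeadow add mul neg zero one) (x : P) :
    add x (mul zero x) = x := by
  have h := hP.mul_add x one zero
  rw [hP.add_zero, hP.mul_comm x one, hP.one_mul, hP.mul_comm x zero] at h
  exact h.symm

lemma l4 (hP : IsPreMeadow add mul neg zero one) (x : P) :
    mul x (mul zero x) = mul zero x := by
  have h3 : add (mul zero x) (mul zero x) = mul zero x := by
    have := l3 hP (mul zero x); rwa [l1 hP] at this
  calc mul x (mul zero x) = mul (mul zero x) x := hP.mul_comm _ _
    _ = mul zero (add x x) := (hP.zero_mul_add x x).symm
    _ = add (mul zero x) (mul zero x) := hP.mul_add zero x x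
    _ = mul zero x := h3

lemma lneg (hP : IsPreMeadow add mul neg zero one) (x : P) :
    mul zero (neg x) = mul zero x := by
  have h2 := hP.zero_mul_add (neg x) x
  rw [hP.add_comm, hP.add_neg, l1 hP] at h2
  have h3 := hP.zero_mul_add (neg x) (neg (neg x))
  rw [hP.add_neg, l1 hP, hP.neg_neg] at h3
  rw [h3, ← h2]

lemma lmul0 (hP : IsPreMeadow add mul neg zero one) (x y : P) :
    mul zero (mul x y) = mul (mul zero x) (mul zero y) := by
  have h : mul x (mul zero y) = mul zero (mul x y) := by
    rw [← hP.mul_assoc x zero y, hP.mul_comm x zero, hP.mul_assoc]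
  rw [hP.mul_assoc zero x (mul zero y), h, l1 hP]

/-- if `v ≤ 0x` then `x·v = v`. -/
lemma lmulv (hP : IsPreMeadow add mul neg zero one) (x v : P)
    (hv : mul v (mul zero x) = v) : mul x v = v := by
  calc mul x v = mul x (mul v (mul zero x)) := by rw [hv]
    _ = mul x (mul (mul zero x) v) := by rw [hP.mul_comm v]
    _ = mul (mul x (mul zero x)) v := (hP.mul_assoc _ _ _).symm
    _ = mul (mul zero x) v := by rw [l4 hP]
    _ = mul v (mul zero x) := hP.mul_comm _ _
    _ = v := hv

/-- if `0x = u` and `v·u = v` then `0(x+v) = v`. -/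
lemma lrestrict (hP : IsPreMeadow add mul neg zero one) (x v : P)
    (hv : mul v (mul zero x) = v) : mul zero (add x v) = v := by
  rw [hP.zero_mul_add x v, hP.mul_comm, hv]

/-- if `u, v ∈ 0·P` and `v ≤ u` then `u + v = v`. -/
lemma labsorb (hP : IsPreMeadow add mul neg zero one) (u v : P)
    (hu : mul zero u = u) (hv : mul zero v = v) (hvu : mul v u = v) :
    add u v = v := by
  have h1 := hP.mul_add zero u v
  rw [hu, hv] at h1
  rw [← h1, hP.zero_mul_add, hu, hP.mul_comm, hvu]

lemma lone0 (hP : IsPreMeadow add mul neg zero one) (x : P) :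
    mul zero (add one x) = mul zero x := by
  have : mul zero one = zero := by rw [hP.mul_comm, hP.one_mul]
  rw [hP.zero_mul_add, this]

/-- The commutative ring structure on a component `P_z`. -/
def componentRing {P : Type*} (add mul : P → P → P) (neg : P → P) (zero one : P)
    (hP : IsPreMeadow add mul neg zero one) (z : P) (hz : mul zero z = z) :
    CommRing {x : P // mul zero x = z} :=
  letI zeroI : Zero {x : P // mul zero x = z} := ⟨⟨z, hz⟩⟩
  letI addI : Add {x : P // mul zero x = z} := ⟨fun p q => ⟨add p.1 q.1, by
    rw [hP.zero_mul_add, p.2, hP.mul_comm]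
    have := l4 hP q.1; rwa [q.2] at this⟩⟩
  letI negI : Neg {x : P // mul zero x = z} := ⟨fun p => ⟨neg p.1, by rw [lneg hP, p.2]⟩⟩
  letI mulI : Mul {x : P // mul zero x = z} := ⟨fun p q => ⟨mul p.1 q.1, by
    rw [lmul0 hP, p.2, q.2]
    have := l4 hP z; rwa [hz] at this⟩⟩
  letI oneI : One {x : P // mul zero x = z} := ⟨⟨add one z, by rw [lone0 hP, hz]⟩⟩
  { add := (· + ·), zero := 0, neg := (- ·), mul := (· * ·), one := 1,
    nsmul := nsmulRec, zsmul := zsmulRec,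
    add_assoc := fun p q r => Subtype.ext (hP.add_assoc _ _ _),
    add_comm := fun p q => Subtype.ext (hP.add_comm _ _),
    zero_add := fun p => Subtype.ext (by
      show add z p.1 = p.1
      have := l3 hP p.1; rw [p.2] at this
      rw [hP.add_comm]; exact this),
    add_zero := fun p => Subtype.ext (by
      show add p.1 z = p.1
      have := l3 hP p.1; rwa [p.2] at this),
    neg_add_cancel := fun p => Subtype.ext (by
      show add (neg p.1) p.1 = z
      rw [hP.add_comm, hP.add_neg, p.2]),
    mul_assoc := fun p q r => Subtype.ext (hP.mul_assoc _ _ _),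
    mul_comm := fun p q => Subtype.ext (hP.mul_comm _ _),
    one_mul := fun p => Subtype.ext (by
      show mul (add one z) p.1 = p.1
      rw [hP.mul_comm, hP.mul_add, hP.mul_comm p.1 one, hP.one_mul]
      have hpz : mul p.1 z = z := by
        have := l4 hP p.1; rwa [p.2] at this
      have h2 := l3 hP p.1; rw [p.2] at h2
      rw [hpz]; exact h2),
    mul_one := fun p => Subtype.ext (by
      show mul p.1 (add one z) = p.1
      rw [hP.mul_add, hP.mul_comm p.1 one, hP.one_mul]
      have hpz : mul p.1 z = z := by
        have := l4 hP p.1; rwa [p.2] at this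
      have h2 := l3 hP p.1; rw [p.2] at h2
      rw [hpz]; exact h2),
    left_distrib := fun p q r => Subtype.ext (hP.mul_add _ _ _),
    right_distrib := fun p q r => Subtype.ext (by
      show mul (add p.1 q.1) r.1 = add (mul p.1 r.1) (mul q.1 r.1)
      rw [hP.mul_comm, hP.mul_add, hP.mul_comm r.1, hP.mul_comm r.1]),
    zero_mul := fun p => Subtype.ext (by
      show mul z p.1 = z
      rw [hP.mul_comm]
      have := l4 hP p.1; rwa [p.2] at this),
    mul_zero := fun p => Subtype.ext (by
      show mul p.1 z = z
      have := l4 hP p.1; rwa [p.2] at this) }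

end PMaux

open TopologicalSpace in
/-- Let `X` be a topological space, `P` a pre-meadow with `𝐚`, and
`Φ : 0·P → Open(X)` an isomorphism of lattices.  Then the assignment
`F_{P,Φ}(U) = P_{Φ⁻¹(U)}`, with restriction maps `x ↦ x + Φ⁻¹(V)` for open `V ⊆ U`, is a presheaf
of commutative rings on `X`: each `P_{Φ⁻¹(U)}` is a commutative ring (with zero `Φ⁻¹(U)` and one
`1 + Φ⁻¹(U)`, and operations induced from `P`), `P_{Φ⁻¹(∅)}` is the zero ring, the restriction
maps are well defined ring homomorphisms, the restriction along `U ⊆ U` is the identity, and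
restrictions compose. -/
theorem statement9 {X : Type*} [TopologicalSpace X]
    {P : Type*} (add mul : P → P → P) (neg : P → P) (zero one a : P)
    (hP : IsPreMeadowWithA add mul neg zero one a)
    (Φ : {z : P // ∃ x : P, mul zero x = z} ≃ Opens X)
    (hΦ : ∀ u v : {z : P // ∃ x : P, mul zero x = z}, mul u.1 v.1 = u.1 ↔ Φ u ≤ Φ v) :
    -- each `F_{P,Φ}(U) = P_{Φ⁻¹(U)}` is a commutative ring with the induced operations,
    -- zero `Φ⁻¹(U)` and one `1 + Φ⁻¹(U)`
    (∀ U : Opens X, ∃ R : CommRing {x : P // mul zero x = (Φ.symm U).1},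
      (∀ p q : {x : P // mul zero x = (Φ.symm U).1},
        ((letI := R; p + q : {x : P // mul zero x = (Φ.symm U).1}) : P) = add p.1 q.1) ∧
      (∀ p q : {x : P // mul zero x = (Φ.symm U).1},
        ((letI := R; p * q : {x : P // mul zero x = (Φ.symm U).1}) : P) = mul p.1 q.1) ∧
      ((letI := R; (0 : {x : P // mul zero x = (Φ.symm U).1})) : P) = (Φ.symm U).1 ∧
      ((letI := R; (1 : {x : P // mul zero x = (Φ.symm U).1})) : P) = add one (Φ.symm U).1) ∧
    -- `F_{P,Φ}(∅)` is the zero ring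
    (∀ x y : P, mul zero x = (Φ.symm ⊥).1 → mul zero y = (Φ.symm ⊥).1 → x = y) ∧
    -- the restriction maps are well defined
    (∀ (U V : Opens X), V ≤ U → ∀ x : P, mul zero x = (Φ.symm U).1 →
      mul zero (add x (Φ.symm V).1) = (Φ.symm V).1) ∧
    -- the restriction maps are ring homomorphisms
    (∀ (U V : Opens X), V ≤ U → ∀ x y : P, mul zero x = (Φ.symm U).1 →
      mul zero y = (Φ.symm U).1 →
      add (add x y) (Φ.symm V).1 = add (add x (Φ.symm V).1) (add y (Φ.symm V).1)) ∧
    (∀ (U V : Opens X), V ≤ U → ∀ x y : P, mul zero x = (Φ.symm U).1 →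
      mul zero y = (Φ.symm U).1 →
      add (mul x y) (Φ.symm V).1 = mul (add x (Φ.symm V).1) (add y (Φ.symm V).1)) ∧
    (∀ (U V : Opens X), V ≤ U →
      add (add one (Φ.symm U).1) (Φ.symm V).1 = add one (Φ.symm V).1) ∧
    -- restriction along `U ⊆ U` is the identity
    (∀ U : Opens X, ∀ x : P, mul zero x = (Φ.symm U).1 → add x (Φ.symm U).1 = x) ∧
    -- restrictions compose
    (∀ (U V W : Opens X), V ≤ U → W ≤ V → ∀ x : P, mul zero x = (Φ.symm U).1 →
      add (add x (Φ.symm V).1) (Φ.symm W).1 = add x (Φ.symm W).1) := by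

  classical
  have hP' := hP.toIsPreMeadow
  -- every `(Φ.symm U).1` is in `0·P`, hence idempotent under `mul zero`
  have hu : ∀ U : Opens X, mul zero (Φ.symm U).1 = (Φ.symm U).1 := by
    intro U
    obtain ⟨x, hx⟩ := (Φ.symm U).2
    rw [← hx, PMaux.l1 hP']
  have hle : ∀ U V : Opens X, V ≤ U → mul (Φ.symm V).1 (Φ.symm U).1 = (Φ.symm V).1 := by
    intro U V h
    exact (hΦ (Φ.symm V) (Φ.symm U)).2 (by simpa using h)
  refine ⟨?_, ?_, ?_, ?_, ?_, ?_, ?_, ?_⟩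
  · intro U
    exact ⟨PMaux.componentRing add mul neg zero one hP' _ (hu U),
      fun p q => rfl, fun p q => rfl, rfl, rfl⟩
  · -- the zero ring at ⊥
    obtain ⟨x0, hx0, huniq⟩ := hP.a_spec
    have ha0 : mul zero a = a := by rw [← hx0, PMaux.l1 hP']
    have hbot : (Φ.symm ⊥).1 = a := by
      have hmula : mul a (Φ.symm ⊥).1 = a := by
        have h1 := hP'.zero_mul_add a (Φ.symm ⊥).1
        rw [ha0] at h1
        rw [← h1, hP'.add_comm, hP.add_a, ha0]
      have h2 : Φ (⟨a, x0, hx0⟩ : {z : P // ∃ x : P, mul zero x = z}) ≤ ⊥ := by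
        have := (hΦ ⟨a, x0, hx0⟩ (Φ.symm ⊥)).1 hmula
        simpa using this
      have h3 : Φ (⟨a, x0, hx0⟩ : {z : P // ∃ x : P, mul zero x = z}) = ⊥ := le_bot_iff.1 h2
      have h4 : Φ.symm ⊥ = (⟨a, x0, hx0⟩ : {z : P // ∃ x : P, mul zero x = z}) := by
        rw [← h3, Φ.symm_apply_apply]
      rw [h4]
    intro x y hx hy
    rw [hbot] at hx hy
    rw [huniq x hx, huniq y hy]
  · intro U V h x hx
    exact PMaux.lrestrict hP' x _ (by rw [hx]; exact hle U V h)
  · intro U V h x y hx hy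
    set v := (Φ.symm V).1 with hv
    have hvv : add v v = v := by
      have := PMaux.l3 hP' v; rwa [hu V] at this
    calc add (add x y) v = add x (add y v) := hP'.add_assoc _ _ _
      _ = add x (add y (add v v)) := by rw [hvv]
      _ = add x (add (add y v) v) := by rw [hP'.add_assoc y v v]
      _ = add x (add v (add y v)) := by rw [hP'.add_comm (add y v) v]
      _ = add (add x v) (add y v) := (hP'.add_assoc _ _ _).symm
  · intro U V h x y hx hy
    set v := (Φ.symm V).1 with hv
    have hxv : mul x v = v := PMaux.lmulv hP' x v (by rw [hx]; exact hle U V h)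
    have hyv : mul y v = v := PMaux.lmulv hP' y v (by rw [hy]; exact hle U V h)
    have hvv2 : mul v v = v := by
      have := PMaux.l4 hP' v; rwa [hu V] at this
    have hvv : add v v = v := by
      have := PMaux.l3 hP' v; rwa [hu V] at this
    calc add (mul x y) v = add (mul x y) (add v v) := by rw [hvv]
      _ = add (add (mul x y) v) v := (hP'.add_assoc _ _ _).symm
      _ = add (add (mul y x) (mul y v)) (add (mul v x) (mul v v)) := by
          rw [hP'.mul_comm x y, hyv, hP'.mul_comm v x, hxv, hvv2, hvv]
      _ = add (mul y (add x v)) (mul v (add x v)) := by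
          rw [hP'.mul_add y x v, hP'.mul_add v x v]
      _ = add (mul (add x v) y) (mul (add x v) v) := by
          rw [hP'.mul_comm y (add x v), hP'.mul_comm v (add x v)]
      _ = mul (add x v) (add y v) := (hP'.mul_add _ _ _).symm
  · intro U V h
    have huv : add (Φ.symm U).1 (Φ.symm V).1 = (Φ.symm V).1 :=
      PMaux.labsorb hP' _ _ (hu U) (hu V) (hle U V h)
    rw [hP'.add_assoc, huv]
  · intro U x hx
    have := PMaux.l3 hP' x; rwa [hx] at this
  · intro U V W h1 h2 x hx
    have hvw : add (Φ.symm V).1 (Φ.symm W).1 = (Φ.symm W).1 :=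
      PMaux.labsorb hP' _ _ (hu V) (hu W) (hle V W h2)
    rw [hP'.add_assoc, hvw]
end

section
/- Let X and Y be T_D topological spaces (every singleton is locally closed). Then there exists a homeomorphism f : X → Y if and only if there exists a lattice isomorphism f′ : Open(X) → Open(Y); moreover, the correspondence is compatible in the sense that the lattice isomorphism induced by a homeomorphism f is given by f′(U) = f(U) for every open U ⊆ X. -/
/-!
A pair of opens `V, W` with `W ≰ V` such that every open `U` satisfies `U ≤ V` or `W ≤ U ⊔ V`
is a purely order-theoretic notion, so it is transported by any isomorphism of the lattices of
opens. Any point `p ∈ W \ V` of such a pair is recovered from the lattice: its open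
neighbourhoods are exactly the opens `U ≰ V`. In a `T_D` space every point `x` lies in such a
pair, namely `V = (closure {x})ᶜ` and `W = (closure {x} \ {x})ᶜ`. Hence a lattice isomorphism
`e` sends `x` to a point `y` with `y ∈ e U ↔ x ∈ U` for all opens `U`; since `T_D` spaces are
`T_0`, this `y` is unique and the resulting map is a homeomorphism.
-/

open TopologicalSpace Function

def IsPointPair {α : Type*} [Lattice α] (V W : α) : Prop :=
  ¬ W ≤ V ∧ ∀ U, U ≤ V ∨ W ≤ U ⊔ V

theorem IsPointPair.map {α β : Type*} [Lattice α] [Lattice β] {V W : α}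
    (h : IsPointPair V W) (e : α ≃o β) : IsPointPair (e V) (e W) := by
  refine ⟨fun hle => h.1 (e.le_iff_le.mp hle), fun U => ?_⟩
  rcases h.2 (e.symm U) with hU | hU
  · exact .inl (e.symm_apply_le.mp hU)
  · right
    simpa only [e.map_sup, e.apply_symm_apply] using e.monotone hU

section

variable {X Y : Type*} [TopologicalSpace X] [TopologicalSpace Y]

theorem IsPointPair.mem_iff_not_le {V W : Opens X} (h : IsPointPair V W) {p : X}
    (hpW : p ∈ W) (hpV : p ∉ V) (U : Opens X) : p ∈ U ↔ ¬ U ≤ V := by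
  refine ⟨fun hpU hUV => hpV (hUV hpU), fun hUV => ?_⟩
  have hpUV : p ∈ U ⊔ V := (h.2 U).resolve_left hUV hpW
  rw [← SetLike.mem_coe, Opens.coe_sup] at hpUV
  exact hpUV.resolve_right hpV

theorem isPointPair_closure_compl_coborder {x : X} (hx : IsLocallyClosed {x}) :
    IsPointPair (⟨(closure {x})ᶜ, isClosed_closure.isOpen_compl⟩ : Opens X)
      ⟨coborder {x}, hx.isOpen_coborder⟩ := by
  refine ⟨fun hle => hle (subset_coborder rfl) (subset_closure rfl), fun U => ?_⟩
  by_cases hxU : x ∈ U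
  · right
    intro z hz
    rw [← SetLike.mem_coe, Opens.coe_sup]
    by_cases hzx : z ∈ closure {x}
    · left
      rwa [show z = x by by_contra hne; exact hz ⟨hzx, hne⟩]
    · exact .inr hzx
  · left
    intro z hzU hzx
    obtain ⟨w, hwU, rfl⟩ := mem_closure_iff.mp hzx U U.isOpen hzU
    exact hxU hwU

theorem t0Space_of_isLocallyClosed_singleton (hX : ∀ x : X, IsLocallyClosed {x}) :
    T0Space X := by
  refine (t0Space_iff_inseparable X).mpr fun x y hxy => ?_
  have hy_closure : y ∈ closure {x} := specializes_iff_mem_closure.mp hxy.specializes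
  have hy_coborder : y ∈ coborder {x} :=
    (hxy.mem_open_iff (hX x).isOpen_coborder).mp (subset_coborder rfl)
  by_contra hne
  exact hy_coborder ⟨hy_closure, Ne.symm hne⟩

variable (e : Opens X ≃o Opens Y)

theorem exists_forall_mem_orderIso_iff {x : X} (hx : IsLocallyClosed {x}) :
    ∃ y : Y, ∀ U : Opens X, y ∈ e U ↔ x ∈ U := by
  have hpair := isPointPair_closure_compl_coborder hx
  obtain ⟨y, hyW, hyV⟩ := SetLike.not_le_iff_exists.mp (hpair.map e).1
  refine ⟨y, fun U => ?_⟩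
  rw [(hpair.map e).mem_iff_not_le hyW hyV, e.le_iff_le,
    hpair.mem_iff_not_le (subset_coborder rfl) (fun h => h (subset_closure rfl))]

theorem continuous_of_forall_mem_orderIso_iff {f : X → Y}
    (hf : ∀ x U, f x ∈ e U ↔ x ∈ U) : Continuous f := by
  refine continuous_def.mpr fun S hS => ?_
  convert (e.symm ⟨S, hS⟩).isOpen using 1
  ext x
  have hx := hf x (e.symm ⟨S, hS⟩)
  rw [e.apply_symm_apply] at hx
  exact hx

theorem leftInverse_of_forall_mem_orderIso_iff [T0Space X] {f : X → Y} {g : Y → X}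
    (hf : ∀ x U, f x ∈ e U ↔ x ∈ U) (hg : ∀ y V, g y ∈ e.symm V ↔ y ∈ V) :
    LeftInverse g f := fun x =>
  (inseparable_iff_forall_isOpen.mpr fun U hU => by
    have hx := (hg (f x) (e ⟨U, hU⟩)).trans (hf x ⟨U, hU⟩)
    rw [e.symm_apply_apply] at hx
    exact hx).eq

noncomputable def Homeomorph.ofOpensOrderIso (hX : ∀ x : X, IsLocallyClosed {x})
    (hY : ∀ y : Y, IsLocallyClosed {y}) : X ≃ₜ Y :=
  haveI := t0Space_of_isLocallyClosed_singleton hX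
  haveI := t0Space_of_isLocallyClosed_singleton hY
  have hf x := (exists_forall_mem_orderIso_iff e (hX x)).choose_spec
  have hg y := (exists_forall_mem_orderIso_iff e.symm (hY y)).choose_spec
  { toFun x := (exists_forall_mem_orderIso_iff e (hX x)).choose
    invFun y := (exists_forall_mem_orderIso_iff e.symm (hY y)).choose
    left_inv := leftInverse_of_forall_mem_orderIso_iff e hf hg
    right_inv := leftInverse_of_forall_mem_orderIso_iff e.symm hg hf
    continuous_toFun := continuous_of_forall_mem_orderIso_iff e hf
    continuous_invFun := continuous_of_forall_mem_orderIso_iff e.symm hg }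

end

theorem Homeomorph.coe_opensCongr_apply {X Y : Type*} [TopologicalSpace X] [TopologicalSpace Y]
    (f : X ≃ₜ Y) (U : Opens X) : (f.opensCongr U : Set Y) = f '' U :=
  (f.toEquiv.image_eq_preimage_symm U).symm

open TopologicalSpace in
/-- **Thron.** Let `X` and `Y` be `T_D` topological spaces (every singleton is
locally closed).  Then there is a homeomorphism `X ≃ₜ Y` if and only if there is a lattice
(order) isomorphism `Open(X) ≃o Open(Y)`; moreover the lattice isomorphism induced by a
homeomorphism `f` is given by `U ↦ f(U)`. -/
theorem statement10 {X Y : Type*} [TopologicalSpace X] [TopologicalSpace Y]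
    (hX : ∀ x : X, ∃ U C : Set X, IsOpen U ∧ IsClosed C ∧ {x} = U ∩ C)
    (hY : ∀ y : Y, ∃ U C : Set Y, IsOpen U ∧ IsClosed C ∧ {y} = U ∩ C) :
    (Nonempty (X ≃ₜ Y) ↔ Nonempty (Opens X ≃o Opens Y)) ∧
    (∀ f : X ≃ₜ Y, ∃ e : Opens X ≃o Opens Y,
      ∀ U : Opens X, (e U : Set Y) = f '' (U : Set X)) :=
  ⟨⟨fun ⟨f⟩ => ⟨f.opensCongr⟩, fun ⟨e⟩ => ⟨Homeomorph.ofOpensOrderIso e hX hY⟩⟩,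
    fun f => ⟨f.opensCongr, f.coe_opensCongr_apply⟩⟩
end

section
/- Let X be a T_D topological space and let F and F′ be two presheaves of commutative rings on X. Then the pre-meadows with 𝐚 T(F) = ⊔_{U ∈ Open(X)} F(U) and T(F′) = ⊔_{U ∈ Open(X)} F′(U) (with operations s + t := ρ_{U∩V,U}(s) + ρ_{U∩V,V}(t) and s·t := ρ_{U∩V,U}(s)·ρ_{U∩V,V}(t)) are isomorphic if and only if there exists a homeomorphism f : X → X such that F is isomorphic to the direct image presheaf f_*(F′). -/
open TopologicalSpace in
/-- Addition on the disjoint union `M_F = ⊔_{U ∈ Open(X)} F(U)`: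
`s + t = ρ_{U∩V,U}(s) + ρ_{U∩V,V}(t)`. -/
def psAdd {X : Type*} [TopologicalSpace X] {F : Opens X → Type*} [∀ U, CommRing (F U)]
    (res : ∀ {U V : Opens X}, V ≤ U → (F U →+* F V)) (s t : Σ U : Opens X, F U) :
    Σ U : Opens X, F U :=
  ⟨s.1 ⊓ t.1, res (inf_le_left : s.1 ⊓ t.1 ≤ s.1) s.2 + res (inf_le_right : s.1 ⊓ t.1 ≤ t.1) t.2⟩

open TopologicalSpace in
/-- Multiplication on the disjoint union `M_F = ⊔_{U ∈ Open(X)} F(U)`: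
`s · t = ρ_{U∩V,U}(s) · ρ_{U∩V,V}(t)`. -/
def psMul {X : Type*} [TopologicalSpace X] {F : Opens X → Type*} [∀ U, CommRing (F U)]
    (res : ∀ {U V : Opens X}, V ≤ U → (F U →+* F V)) (s t : Σ U : Opens X, F U) :
    Σ U : Opens X, F U :=
  ⟨s.1 ⊓ t.1, res (inf_le_left : s.1 ⊓ t.1 ≤ s.1) s.2 * res (inf_le_right : s.1 ⊓ t.1 ≤ t.1) t.2⟩

open TopologicalSpace in
/-- Negation on `M_F`, computed sectionwise. -/
def psNeg {X : Type*} [TopologicalSpace X] (F : Opens X → Type*) [∀ U, CommRing (F U)]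
    (s : Σ U : Opens X, F U) : Σ U : Opens X, F U :=
  ⟨s.1, -s.2⟩

open TopologicalSpace in
/-- The zero of `M_F`: the zero section over the whole space. -/
def psZero {X : Type*} [TopologicalSpace X] (F : Opens X → Type*) [∀ U, CommRing (F U)] :
    Σ U : Opens X, F U :=
  ⟨⊤, 0⟩

open TopologicalSpace in
/-- The one of `M_F`: the unit section over the whole space. -/
def psOne {X : Type*} [TopologicalSpace X] (F : Opens X → Type*) [∀ U, CommRing (F U)] :
    Σ U : Opens X, F U :=
  ⟨⊤, 1⟩

open TopologicalSpace in
/-- The element `𝐚` of `M_F`: the unique element of `F(∅)`. -/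
def psA {X : Type*} [TopologicalSpace X] (F : Opens X → Type*) [∀ U, CommRing (F U)] :
    Σ U : Opens X, F U :=
  ⟨⊥, 0⟩

open TopologicalSpace in
/-- The preimage of an open set under a homeomorphism. -/
def preim {X : Type*} [TopologicalSpace X] (f : X ≃ₜ X) (U : Opens X) : Opens X :=
  ⟨f ⁻¹' (U : Set X), U.isOpen.preimage f.continuous⟩

open TopologicalSpace in
theorem preim_mono {X : Type*} [TopologicalSpace X] (f : X ≃ₜ X) {U V : Opens X} (h : V ≤ U) :
    preim f V ≤ preim f U :=
  fun _ ha => h ha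


/-! A pre-meadow isomorphism `φ : T(F) ≃ T(F')` commutes with multiplication by `0 = ⟨X, 0⟩`,
which replaces a section by the zero section over its domain. Hence `φ` permutes the domains
through a bijection `g` of `Opens X`, and `g` preserves `⊓` because zero sections multiply by
intersecting their domains; so `g` is a lattice automorphism. On a `T_D` space a point `x`
with `{x} = U ∩ C` (`U` open, `C` closed) is determined, in purely lattice-theoretic terms, by
the pair of opens `U ⊋ U \ {x}`, so `g` is induced by a homeomorphism `f`. On each fibre `φ`
is then a ring isomorphism `F(U) ≃ F'(f⁻¹ U)`, and it commutes with restriction to `V ≤ U`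
because restriction is multiplication by the unit section over `V`. Conversely, such a family
of ring isomorphisms assembles into a sigma equivalence over `f`. -/

open TopologicalSpace Function

section LocallyClosedPoints

variable {X Y : Type*} [TopologicalSpace X] [TopologicalSpace Y]

theorem Inseparable.eq_of_isLocallyClosed_singleton {x y : X} (hy : IsLocallyClosed {y})
    (hxy : Inseparable x y) : x = y := by
  obtain ⟨U, C, hU, hC, hUC⟩ := hy
  have hyUC : y ∈ U ∩ C := hUC ▸ Set.mem_singleton y
  have hxUC : x ∈ U ∩ C :=
    ⟨(hxy.mem_open_iff hU).2 hyUC.1, (hxy.mem_closed_iff hC).2 hyUC.2⟩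
  exact Set.mem_singleton_iff.1 (hUC ▸ hxUC)

/-- The witnesses are `U` and `U \ {x} = U ∩ Cᶜ`, where `{x} = U ∩ C`. -/
theorem exists_opens_mem_iff_le_sup {x : X} (hx : IsLocallyClosed {x}) :
    ∃ U V : Opens X, ¬U ≤ V ∧ (∀ W : Opens X, U ≤ V ⊔ W ∨ U ⊓ W ≤ V) ∧
      ∀ W : Opens X, x ∈ W ↔ U ≤ V ⊔ W := by
  obtain ⟨U, C, hU, hC, hUC⟩ := hx
  obtain ⟨hxU, hxC⟩ : x ∈ U ∩ C := hUC ▸ Set.mem_singleton x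
  have eq_of_mem {z : X} (hzU : z ∈ U) (hzC : z ∈ C) : z = x :=
    Set.mem_singleton_iff.1 (hUC ▸ ⟨hzU, hzC⟩)
  let V : Opens X := ⟨U ∩ Cᶜ, hU.inter hC.isOpen_compl⟩
  have le_sup_iff (W : Opens X) : (⟨U, hU⟩ : Opens X) ≤ V ⊔ W ↔ x ∈ W := by
    refine ⟨fun h => ?_, fun hxW z hzU => ?_⟩
    · rcases Opens.mem_sup.1 (h hxU) with hxV | hxW
      · exact absurd hxC hxV.2
      · exact hxW
    · by_cases hzC : z ∈ C
      · exact Or.inr (eq_of_mem hzU hzC ▸ hxW)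
      · exact Or.inl ⟨hzU, hzC⟩
  refine ⟨⟨U, hU⟩, V, fun h => ?_, fun W => ?_, fun W => (le_sup_iff W).symm⟩
  · exact Opens.mem_bot.1 ((le_sup_iff ⊥).1 (h.trans le_sup_left))
  · by_cases hxW : x ∈ W
    · exact Or.inl ((le_sup_iff W).2 hxW)
    · exact Or.inr fun z ⟨hzU, hzW⟩ => ⟨hzU, fun hzC => hxW (eq_of_mem hzU hzC ▸ hzW)⟩

theorem exists_forall_mem_iff_le_sup {U V : Opens X} (hUV : ¬U ≤ V)
    (hUV' : ∀ W : Opens X, U ≤ V ⊔ W ∨ U ⊓ W ≤ V) :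
    ∃ y : X, ∀ W : Opens X, y ∈ W ↔ U ≤ V ⊔ W := by
  obtain ⟨y, hyU, hyV⟩ := SetLike.not_le_iff_exists.1 hUV
  refine ⟨y, fun W => ⟨fun hyW => ?_, fun h => ?_⟩⟩
  · exact (hUV' W).resolve_right fun h => hyV (h ⟨hyU, hyW⟩)
  · rcases Opens.mem_sup.1 (h hyU) with hyV' | hyW
    · exact absurd hyV' hyV
    · exact hyW

theorem OrderIso.exists_mem_apply_iff {x : X} (hx : IsLocallyClosed {x})
    (g : Opens X ≃o Opens Y) : ∃ y : Y, ∀ W : Opens X, y ∈ g W ↔ x ∈ W := by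
  obtain ⟨U, V, hUV, hUV', hx⟩ := exists_opens_mem_iff_le_sup hx
  obtain ⟨y, hy⟩ := exists_forall_mem_iff_le_sup (U := g U) (V := g V)
    (by rwa [g.le_iff_le]) fun W => by
      obtain ⟨W, rfl⟩ := g.surjective W
      rw [← map_sup, ← map_inf, g.le_iff_le, g.le_iff_le]
      exact hUV' W
  exact ⟨y, fun W => by rw [hy, ← map_sup, g.le_iff_le, hx]⟩

end LocallyClosedPoints

section HomeomorphOfOrderIso

variable {X Y : Type*} [TopologicalSpace X] [TopologicalSpace Y]
  (hX : ∀ x : X, IsLocallyClosed {x}) (hY : ∀ y : Y, IsLocallyClosed {y})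

noncomputable def pointMapOfOrderIso (g : Opens X ≃o Opens Y) (x : X) : Y :=
  (g.exists_mem_apply_iff (hX x)).choose

theorem pointMapOfOrderIso_mem_iff (g : Opens X ≃o Opens Y) (x : X) (W : Opens X) :
    pointMapOfOrderIso hX g x ∈ g W ↔ x ∈ W :=
  (g.exists_mem_apply_iff (hX x)).choose_spec W

theorem preimage_pointMapOfOrderIso (g : Opens X ≃o Opens Y) (W : Opens Y) :
    pointMapOfOrderIso hX g ⁻¹' W = g.symm W := by
  ext x
  simpa using pointMapOfOrderIso_mem_iff hX g x (g.symm W)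

theorem continuous_pointMapOfOrderIso (g : Opens X ≃o Opens Y) :
    Continuous (pointMapOfOrderIso hX g) :=
  continuous_def.2 fun s hs => preimage_pointMapOfOrderIso hX g ⟨s, hs⟩ ▸ (g.symm _).isOpen

include hY in
theorem pointMapOfOrderIso_symm_apply (g : Opens X ≃o Opens Y) (x : X) :
    pointMapOfOrderIso hY g.symm (pointMapOfOrderIso hX g x) = x := by
  have := t0Space_of_isLocallyClosed_singleton hX
  refine Inseparable.eq (inseparable_iff_forall_isOpen.2 fun s hs => ?_)
  have h := pointMapOfOrderIso_mem_iff hY g.symm (pointMapOfOrderIso hX g x) (g ⟨s, hs⟩)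
  rwa [g.symm_apply_apply, pointMapOfOrderIso_mem_iff] at h

noncomputable def homeomorphOfOrderIso (g : Opens X ≃o Opens Y) : X ≃ₜ Y where
  toFun := pointMapOfOrderIso hX g
  invFun := pointMapOfOrderIso hY g.symm
  left_inv := pointMapOfOrderIso_symm_apply hX hY g
  right_inv y := by
    simpa using pointMapOfOrderIso_symm_apply hY hX g.symm y
  continuous_toFun := continuous_pointMapOfOrderIso hX g
  continuous_invFun := continuous_pointMapOfOrderIso hY g.symm

theorem preimage_homeomorphOfOrderIso (g : Opens X ≃o Opens Y) (W : Opens Y) :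
    homeomorphOfOrderIso hX hY g ⁻¹' W = g.symm W :=
  preimage_pointMapOfOrderIso hX g W

end HomeomorphOfOrderIso

section FiberMap

variable {α α' : Type*} {β : α → Type*} {γ : α' → Type*}
  (φ : (Σ a, β a) ≃ Σ a', γ a') {σ : α → α'} (hσ : ∀ a x, (φ ⟨a, x⟩).1 = σ a)

def Equiv.fiberMap (a : α) (x : β a) : γ (σ a) :=
  cast (congrArg γ (hσ a x)) (φ ⟨a, x⟩).2

theorem Equiv.apply_mk_eq_mk_fiberMap (a : α) (x : β a) :
    φ ⟨a, x⟩ = ⟨σ a, φ.fiberMap hσ a x⟩ :=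
  Sigma.ext (hσ a x) (cast_heq _ _).symm

theorem Equiv.fiberMap_bijective (hσ_inj : Injective σ) (a : α) :
    Bijective (φ.fiberMap hσ a) := by
  refine ⟨fun x y hxy => sigma_mk_injective (φ.injective ?_), fun y => ?_⟩
  · rw [φ.apply_mk_eq_mk_fiberMap hσ, φ.apply_mk_eq_mk_fiberMap hσ, hxy]
  · rcases hs : φ.symm ⟨σ a, y⟩ with ⟨b, x⟩
    have hφ : φ ⟨b, x⟩ = ⟨σ a, y⟩ := by rw [← hs, φ.apply_symm_apply]
    obtain rfl : b = a := hσ_inj ((hσ b x).symm.trans (congrArg Sigma.fst hφ))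
    exact ⟨x, sigma_mk_injective ((φ.apply_mk_eq_mk_fiberMap hσ b x).symm.trans hφ)⟩

end FiberMap

section SectionAlgebra

variable {X : Type*} [TopologicalSpace X] {F : Opens X → Type*} [∀ U, CommRing (F U)]
  (res : ∀ {U V : Opens X}, V ≤ U → (F U →+* F V))

theorem sigma_mk_res_eq_of_eq {U V W : Opens X} (hVW : V = W) (hV : V ≤ U) (hW : W ≤ U)
    (x : F U) : (⟨V, res hV x⟩ : Σ U, F U) = ⟨W, res hW x⟩ := by
  subst hVW
  rfl

theorem sigma_mk_res_eq_self (res_id : ∀ (U : Opens X) (x : F U), res le_rfl x = x)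
    {U V : Opens X} (hVU : V = U) (h : V ≤ U) (x : F U) :
    (⟨V, res h x⟩ : Σ U, F U) = ⟨U, x⟩ := by
  subst hVU
  rw [res_id]

theorem psAdd_mk_self (res_id : ∀ (U : Opens X) (x : F U), res le_rfl x = x)
    (U : Opens X) (x y : F U) : psAdd res ⟨U, x⟩ ⟨U, y⟩ = ⟨U, x + y⟩ := by
  rw [psAdd, ← map_add]
  exact sigma_mk_res_eq_self res res_id (inf_idem U) _ _

theorem psMul_mk_self (res_id : ∀ (U : Opens X) (x : F U), res le_rfl x = x)
    (U : Opens X) (x y : F U) : psMul res ⟨U, x⟩ ⟨U, y⟩ = ⟨U, x * y⟩ := by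
  rw [psMul, ← map_mul]
  exact sigma_mk_res_eq_self res res_id (inf_idem U) _ _

theorem psZero_psAdd (res_id : ∀ (U : Opens X) (x : F U), res le_rfl x = x)
    (s : Σ U, F U) : psAdd res (psZero F) s = s := by
  rw [psAdd, psZero, map_zero, zero_add]
  exact sigma_mk_res_eq_self res res_id (top_inf_eq s.1) _ _

theorem psAdd_psZero (res_id : ∀ (U : Opens X) (x : F U), res le_rfl x = x)
    (s : Σ U, F U) : psAdd res s (psZero F) = s := by
  rw [psAdd, psZero, map_zero, add_zero]
  exact sigma_mk_res_eq_self res res_id (inf_top_eq s.1) _ _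

theorem psZero_psMul (s : Σ U, F U) : psMul res (psZero F) s = ⟨s.1, 0⟩ := by
  rw [psMul, psZero, map_zero, zero_mul]
  exact Sigma.ext (top_inf_eq s.1) (by rw [top_inf_eq])

theorem psMul_mk_zero (U V : Opens X) :
    psMul res ⟨U, (0 : F U)⟩ ⟨V, (0 : F V)⟩ = ⟨U ⊓ V, 0⟩ := by
  rw [psMul, map_zero, zero_mul]

theorem psMul_mk_one_of_le {U V : Opens X} (h : V ≤ U) (x : F U) :
    psMul res ⟨U, x⟩ ⟨V, (1 : F V)⟩ = ⟨V, res h x⟩ := by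
  rw [psMul, map_one, mul_one]
  exact sigma_mk_res_eq_of_eq res (inf_eq_right.2 h) _ _ _

end SectionAlgebra

noncomputable def OrderIso.ofBijectiveMapInf {α β : Type*} [SemilatticeInf α] [SemilatticeInf β]
    (g : α → β) (hg : Bijective g) (hinf : ∀ a b, g (a ⊓ b) = g a ⊓ g b) : α ≃o β :=
  OrderIso.ofSurjective
    (OrderEmbedding.ofMapLEIff g fun a b => by
      rw [← inf_eq_left, ← hinf, hg.1.eq_iff, inf_eq_left])
    hg.2

theorem preim_injective {X : Type*} [TopologicalSpace X] (f : X ≃ₜ X) : Injective (preim f) :=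
  fun _ _ h => Opens.ext (f.surjective.preimage_injective (congrArg SetLike.coe h))

section SigmaIsomorphism

variable {X : Type*} [TopologicalSpace X]
  {F : Opens X → Type*} [∀ U, CommRing (F U)]
  {res : ∀ {U V : Opens X}, V ≤ U → (F U →+* F V)}
  {F' : Opens X → Type*} [∀ U, CommRing (F' U)]
  {res' : ∀ {U V : Opens X}, V ≤ U → (F' U →+* F' V)} {φ : (Σ U, F U) ≃ Σ U, F' U}

theorem map_psZero_of_map_psAdd (res_id : ∀ (U : Opens X) (x : F U), res le_rfl x = x)
    (res'_id : ∀ (U : Opens X) (x : F' U), res' le_rfl x = x)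
    (hadd : ∀ s t, φ (psAdd res s t) = psAdd res' (φ s) (φ t)) : φ (psZero F) = psZero F' :=
  calc φ (psZero F) = psAdd res' (φ (psZero F)) (φ (φ.symm (psZero F'))) := by
        rw [φ.apply_symm_apply, psAdd_psZero res' res'_id]
    _ = psZero F' := by rw [← hadd, psZero_psAdd res res_id, φ.apply_symm_apply]

section MapPsMul

variable (hmul : ∀ s t, φ (psMul res s t) = psMul res' (φ s) (φ t))
  (hzero : φ (psZero F) = psZero F')
include hmul hzero

theorem apply_mk_zero_eq (U : Opens X) (x : F U) : φ ⟨U, 0⟩ = ⟨(φ ⟨U, x⟩).1, 0⟩ := by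
  rw [← psZero_psMul res ⟨U, x⟩, hmul, hzero, psZero_psMul]

theorem fst_apply_mk (U : Opens X) (x : F U) : (φ ⟨U, x⟩).1 = (φ ⟨U, 0⟩).1 :=
  (congrArg Sigma.fst (apply_mk_zero_eq hmul hzero U x)).symm

theorem bijective_fst_apply_mk_zero : Bijective fun U => (φ ⟨U, (0 : F U)⟩).1 := by
  refine ⟨fun U V h => ?_, fun V => ?_⟩
  · have h' : φ ⟨U, 0⟩ = φ ⟨V, 0⟩ := by
      rw [apply_mk_zero_eq hmul hzero U 0, apply_mk_zero_eq hmul hzero V 0]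
      exact congrArg (fun W => (⟨W, 0⟩ : Σ U, F' U)) h
    exact congrArg Sigma.fst (φ.injective h')
  · obtain ⟨⟨U, x⟩, hs⟩ := φ.surjective ⟨V, 0⟩
    exact ⟨U, (fst_apply_mk hmul hzero U x).symm.trans (congrArg Sigma.fst hs)⟩

theorem fst_apply_mk_zero_inf (U V : Opens X) :
    (φ ⟨U ⊓ V, 0⟩).1 = (φ ⟨U, (0 : F U)⟩).1 ⊓ (φ ⟨V, (0 : F V)⟩).1 := by
  rw [← psMul_mk_zero res, hmul, apply_mk_zero_eq hmul hzero U 0,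
    apply_mk_zero_eq hmul hzero V 0, psMul_mk_zero]

theorem exists_homeomorph_fst_apply_mk (hX : ∀ x : X, IsLocallyClosed {x}) :
    ∃ f : X ≃ₜ X, ∀ (U : Opens X) (x : F U), (φ ⟨U, x⟩).1 = preim f U := by
  let g := OrderIso.ofBijectiveMapInf _ (bijective_fst_apply_mk_zero hmul hzero)
    (fst_apply_mk_zero_inf hmul hzero)
  refine ⟨homeomorphOfOrderIso hX hX g.symm, fun U x => ?_⟩
  rw [fst_apply_mk hmul hzero]
  exact (Opens.ext (preimage_homeomorphOfOrderIso hX hX g.symm U)).symm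

end MapPsMul

section FiberRingEquiv

variable {σ : Opens X → Opens X} (hσ : ∀ U x, (φ ⟨U, x⟩).1 = σ U)
  (res_id : ∀ (U : Opens X) (x : F U), res le_rfl x = x)
  (res'_id : ∀ (U : Opens X) (x : F' U), res' le_rfl x = x)

include res_id res'_id in
theorem fiberMap_add (hadd : ∀ s t, φ (psAdd res s t) = psAdd res' (φ s) (φ t)) (U : Opens X)
    (x y : F U) : φ.fiberMap hσ U (x + y) = φ.fiberMap hσ U x + φ.fiberMap hσ U y :=
  sigma_mk_injective <| by
    rw [← φ.apply_mk_eq_mk_fiberMap, ← psAdd_mk_self res res_id, hadd,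
      φ.apply_mk_eq_mk_fiberMap hσ, φ.apply_mk_eq_mk_fiberMap hσ, psAdd_mk_self res' res'_id]

include res_id res'_id in
theorem fiberMap_mul (hmul : ∀ s t, φ (psMul res s t) = psMul res' (φ s) (φ t)) (U : Opens X)
    (x y : F U) : φ.fiberMap hσ U (x * y) = φ.fiberMap hσ U x * φ.fiberMap hσ U y :=
  sigma_mk_injective <| by
    rw [← φ.apply_mk_eq_mk_fiberMap, ← psMul_mk_self res res_id, hmul,
      φ.apply_mk_eq_mk_fiberMap hσ, φ.apply_mk_eq_mk_fiberMap hσ, psMul_mk_self res' res'_id]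

variable (hσ_inj : Injective σ) (hadd : ∀ s t, φ (psAdd res s t) = psAdd res' (φ s) (φ t))
  (hmul : ∀ s t, φ (psMul res s t) = psMul res' (φ s) (φ t))

noncomputable def fiberRingEquiv (U : Opens X) : F U ≃+* F' (σ U) :=
  { Equiv.ofBijective _ (φ.fiberMap_bijective hσ hσ_inj U) with
    map_add' := fiberMap_add hσ res_id res'_id hadd U
    map_mul' := fiberMap_mul hσ res_id res'_id hmul U }

theorem fiberRingEquiv_res {U V : Opens X} (hVU : V ≤ U) (hσVU : σ V ≤ σ U) (x : F U) :
    fiberRingEquiv hσ res_id res'_id hσ_inj hadd hmul V (res hVU x) =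
      res' hσVU (fiberRingEquiv hσ res_id res'_id hσ_inj hadd hmul U x) := by
  have hone : φ.fiberMap hσ V 1 = 1 :=
    map_one (fiberRingEquiv hσ res_id res'_id hσ_inj hadd hmul V)
  have h := hmul ⟨U, x⟩ ⟨V, 1⟩
  rw [psMul_mk_one_of_le res hVU, φ.apply_mk_eq_mk_fiberMap hσ, φ.apply_mk_eq_mk_fiberMap hσ,
    φ.apply_mk_eq_mk_fiberMap hσ V 1, hone, psMul_mk_one_of_le res' hσVU] at h
  exact sigma_mk_injective h

end FiberRingEquiv

end SigmaIsomorphism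

section DirectImage

variable {X : Type*} [TopologicalSpace X]
  {F : Opens X → Type*} [∀ U, CommRing (F U)] {F' : Opens X → Type*} [∀ U, CommRing (F' U)]
  {f : X ≃ₜ X} {e : ∀ U : Opens X, F U ≃ F' (preim f U)}

variable (e) in
def sigmaEquivOfPreim : (Σ U, F U) ≃ Σ U, F' U :=
  Equiv.sigmaCongr f.symm.opensCongr.toEquiv e

section Restriction

variable (res : ∀ {U V : Opens X}, V ≤ U → (F U →+* F V))
  (res' : ∀ {U V : Opens X}, V ≤ U → (F' U →+* F' V))
  (he_res : ∀ (U V : Opens X) (h : V ≤ U) (x : F U),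
    e V (res h x) = res' (preim_mono f h) (e U x))
include he_res

theorem sigmaEquivOfPreim_psAdd
    (he_add : ∀ (U : Opens X) (x y : F U), e U (x + y) = e U x + e U y) (s t : Σ U, F U) :
    sigmaEquivOfPreim e (psAdd res s t) =
      psAdd res' (sigmaEquivOfPreim e s) (sigmaEquivOfPreim e t) := by
  show (⟨preim f (s.1 ⊓ t.1), e _ (res _ s.2 + res _ t.2)⟩ : Σ U, F' U) =
    ⟨preim f s.1 ⊓ preim f t.1, _⟩
  rw [he_add, he_res, he_res]
  rfl

theorem sigmaEquivOfPreim_psMul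
    (he_mul : ∀ (U : Opens X) (x y : F U), e U (x * y) = e U x * e U y) (s t : Σ U, F U) :
    sigmaEquivOfPreim e (psMul res s t) =
      psMul res' (sigmaEquivOfPreim e s) (sigmaEquivOfPreim e t) := by
  show (⟨preim f (s.1 ⊓ t.1), e _ (res _ s.2 * res _ t.2)⟩ : Σ U, F' U) =
    ⟨preim f s.1 ⊓ preim f t.1, _⟩
  rw [he_mul, he_res, he_res]
  rfl

end Restriction

theorem sigmaEquivOfPreim_psOne (he_one : e ⊤ 1 = 1) :
    sigmaEquivOfPreim e (psOne F) = psOne F' := by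
  show (⟨preim f ⊤, e ⊤ 1⟩ : Σ U, F' U) = ⟨⊤, 1⟩
  rw [he_one]
  rfl

end DirectImage

open TopologicalSpace in
theorem statement13_general {X : Type u} [TopologicalSpace X]
    (hTD : ∀ x : X, ∃ U C : Set X, IsOpen U ∧ IsClosed C ∧ {x} = U ∩ C)
    (F : Opens X → Type v) [∀ U, CommRing (F U)]
    (res : ∀ {U V : Opens X}, V ≤ U → (F U →+* F V))
    (res_id : ∀ (U : Opens X) (x : F U), res le_rfl x = x)
    (F' : Opens X → Type v) [∀ U, CommRing (F' U)]
    (res' : ∀ {U V : Opens X}, V ≤ U → (F' U →+* F' V))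
    (res'_id : ∀ (U : Opens X) (x : F' U), res' le_rfl x = x) :
    -- `T(F) ≃ T(F')` as pre-meadows with `𝐚`
    (∃ φ : (Σ U : Opens X, F U) ≃ (Σ U : Opens X, F' U),
      (∀ s t : Σ U : Opens X, F U, φ (psAdd res s t) = psAdd res' (φ s) (φ t)) ∧
      (∀ s t : Σ U : Opens X, F U, φ (psMul res s t) = psMul res' (φ s) (φ t)) ∧
      φ (psOne F) = psOne F') ↔
    -- iff there is a homeomorphism `f` with `F ≅ f_* F'`
    (∃ f : X ≃ₜ X, ∃ e : ∀ U : Opens X, F U ≃ F' (preim f U),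
      (∀ (U : Opens X) (x y : F U), e U (x + y) = e U x + e U y) ∧
      (∀ (U : Opens X) (x y : F U), e U (x * y) = e U x * e U y) ∧
      (∀ U : Opens X, e U (1 : F U) = 1) ∧
      (∀ (U V : Opens X) (h : V ≤ U) (x : F U),
        e V (res h x) = res' (preim_mono f h) (e U x))) := by
  constructor
  · rintro ⟨φ, hadd, hmul, -⟩
    have hzero := map_psZero_of_map_psAdd res_id res'_id hadd
    obtain ⟨f, hf⟩ := exists_homeomorph_fst_apply_mk hmul hzero hTD
    let e := fiberRingEquiv hf res_id res'_id (preim_injective f) hadd hmul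
    refine ⟨f, fun U => (e U).toEquiv, fun U => map_add (e U), fun U => map_mul (e U),
      fun U => map_one (e U), fun U V h => ?_⟩
    exact fiberRingEquiv_res hf res_id res'_id (preim_injective f) hadd hmul h (preim_mono f h)
  · rintro ⟨f, e, he_add, he_mul, he_one, he_res⟩
    exact ⟨sigmaEquivOfPreim e, sigmaEquivOfPreim_psAdd res res' he_res he_add,
      sigmaEquivOfPreim_psMul res res' he_res he_mul, sigmaEquivOfPreim_psOne (he_one ⊤)⟩

open TopologicalSpace in
/-- Let `X` be a `T_D` topological space and `F`, `F'` two presheaves of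
commutative rings on `X`.  Then the pre-meadows with `𝐚`, `T(F) = ⊔_{U ∈ Open(X)} F(U)` and
`T(F') = ⊔_{U ∈ Open(X)} F'(U)`, are isomorphic if and only if there is a homeomorphism
`f : X → X` such that `F` is isomorphic to the direct image presheaf `f_* F'`
(i.e. `U ↦ F'(f⁻¹(U))`). -/
theorem statement13 {X : Type u} [TopologicalSpace X]
    (hTD : ∀ x : X, ∃ U C : Set X, IsOpen U ∧ IsClosed C ∧ {x} = U ∩ C)
    (F : Opens X → Type v) [∀ U, CommRing (F U)] [Subsingleton (F ⊥)]
    (res : ∀ {U V : Opens X}, V ≤ U → (F U →+* F V))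
    (res_id : ∀ (U : Opens X) (x : F U), res le_rfl x = x)
    (res_comp : ∀ {U V W : Opens X} (hVU : V ≤ U) (hWV : W ≤ V) (x : F U),
      res hWV (res hVU x) = res (hWV.trans hVU) x)
    (F' : Opens X → Type v) [∀ U, CommRing (F' U)] [Subsingleton (F' ⊥)]
    (res' : ∀ {U V : Opens X}, V ≤ U → (F' U →+* F' V))
    (res'_id : ∀ (U : Opens X) (x : F' U), res' le_rfl x = x)
    (res'_comp : ∀ {U V W : Opens X} (hVU : V ≤ U) (hWV : W ≤ V) (x : F' U),
      res' hWV (res' hVU x) = res' (hWV.trans hVU) x) :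
    -- `T(F) ≃ T(F')` as pre-meadows with `𝐚`
    (∃ φ : (Σ U : Opens X, F U) ≃ (Σ U : Opens X, F' U),
      (∀ s t : Σ U : Opens X, F U, φ (psAdd res s t) = psAdd res' (φ s) (φ t)) ∧
      (∀ s t : Σ U : Opens X, F U, φ (psMul res s t) = psMul res' (φ s) (φ t)) ∧
      φ (psOne F) = psOne F') ↔
    -- iff there is a homeomorphism `f` with `F ≅ f_* F'`
    (∃ f : X ≃ₜ X, ∃ e : ∀ U : Opens X, F U ≃ F' (preim f U),
      (∀ (U : Opens X) (x y : F U), e U (x + y) = e U x + e U y) ∧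
      (∀ (U : Opens X) (x y : F U), e U (x * y) = e U x * e U y) ∧
      (∀ U : Opens X, e U (1 : F U) = 1) ∧
      (∀ (U V : Opens X) (h : V ≤ U) (x : F U),
        e V (res h x) = res' (preim_mono f h) (e U x))) :=
  statement13_general hTD F res res_id F' res' res'_id
end
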